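/- Let d ≥ 1 and let μ ∈ M_d⁺(ℝ^m) be a finite nonnegative Borel measure with finite d-th moment. Then the first order tangent set to M_d⁺(ℝ^m) at μ, computed in the space M_d(ℝ^m) with the total variation norm, contains the set { h ∈ M_d(ℝ^m) : h⁻ ≪ μ }, where h = h⁺ − h⁻ is the Jordan decomposition of h. -/

import Mathlib

open MeasureTheory
open scoped ENNReal

noncomputable section

abbrev E (m : ℕ) := EuclideanSpace ℝ (Fin m)

/-- Total variation norm of a signed measure. -/
def tvNorm {α : Type*} [MeasurableSpace α] (s : SignedMeasure α) : ℝ :=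
  (s.totalVariation Set.univ).toReal

open scoped Classical in
/-- The signed measure associated to a (finite) nonnegative measure. -/
def toSM {α : Type*} [MeasurableSpace α] (μ : Measure α) : SignedMeasure α :=
  if h : IsFiniteMeasure μ then @Measure.toSignedMeasure α _ μ h else 0

/-- Finite `d`-th moment of a signed measure. -/
def FiniteMomentSM {m : ℕ} (d : ℝ) (s : SignedMeasure (E m)) : Prop :=
  ∫⁻ x, ENNReal.ofReal (‖x‖ ^ d) ∂s.totalVariation < ⊤

/-! Write `h = p - q` for the Jordan decomposition and `f = dq/dμ`. On `A = {f ≤ n}` one has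
`t • q|_A ≤ μ` as soon as `t * n ≤ 1`, so `ν = μ - t • q|_A + t • p` is a nonnegative measure, with
finite moment because `ν ≤ μ + t • p`. Then `(ν - μ) / t - h = q|_{Aᶜ}`, whose total variation
`q {f > n}` tends to `0` as `n → ∞` since `f` is `q`-a.e. finite (`q ≪ μ`). -/

open scoped NNReal
open Filter Topology

namespace MeasureTheory

variable {α : Type*} [MeasurableSpace α]

theorem tendsto_measure_natCast_lt_of_ae_lt_top {μ : Measure α} [IsFiniteMeasure μ]
    {f : α → ℝ≥0∞} (hf : Measurable f) (hfin : ∀ᵐ x ∂μ, f x < ∞) :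
    Tendsto (fun n : ℕ => μ {x | n < f x}) atTop (𝓝 0) := by
  have hlim := tendsto_measure_iInter_atTop (μ := μ)
    (fun n : ℕ => (measurableSet_lt measurable_const hf).nullMeasurableSet)
    (fun a b hab x (hx : (b : ℝ≥0∞) < f x) => lt_of_le_of_lt (by exact_mod_cast hab) hx)
    ⟨0, measure_ne_top _ _⟩
  have hnull : μ (⋂ n : ℕ, {x | (n : ℝ≥0∞) < f x}) = 0 := by
    refine measure_mono_null (fun x hx => ?_) (ae_iff.1 hfin)
    simp only [Set.mem_iInter, Set.mem_ofPred_eq] at hx ⊢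
    exact fun hlt => (ENNReal.exists_nat_gt hlt.ne).elim fun n hn => (hx n).not_gt hn
  rwa [hnull] at hlim

theorem Measure.restrict_setOf_rnDeriv_le_le_smul {ν μ : Measure α}
    [ν.HaveLebesgueDecomposition μ] (hνμ : ν ≪ μ) (C : ℝ≥0∞) :
    ν.restrict {x | ν.rnDeriv μ x ≤ C} ≤ C • μ := by
  have hs : MeasurableSet {x | ν.rnDeriv μ x ≤ C} :=
    measurableSet_le (Measure.measurable_rnDeriv ν μ) measurable_const
  calc ν.restrict {x | ν.rnDeriv μ x ≤ C}
      = (μ.withDensity (ν.rnDeriv μ)).restrict {x | ν.rnDeriv μ x ≤ C} := by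
        rw [Measure.withDensity_rnDeriv_eq ν μ hνμ]
    _ = (μ.restrict {x | ν.rnDeriv μ x ≤ C}).withDensity (ν.rnDeriv μ) :=
        restrict_withDensity hs _
    _ ≤ (μ.restrict {x | ν.rnDeriv μ x ≤ C}).withDensity (fun _ => C) :=
        withDensity_mono ((ae_restrict_mem hs).mono fun _ hx => hx)
    _ = C • μ.restrict {x | ν.rnDeriv μ x ≤ C} := withDensity_const C
    _ ≤ C • μ := by gcongr; exact Measure.restrict_le_self

theorem Measure.smul_restrict_setOf_rnDeriv_le_le {ν μ : Measure α}
    [ν.HaveLebesgueDecomposition μ] (hνμ : ν ≪ μ) {c : ℝ≥0} {C : ℝ≥0∞} (hcC : c * C ≤ 1) :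
    c • ν.restrict {x | ν.rnDeriv μ x ≤ C} ≤ μ := calc
  c • ν.restrict {x | ν.rnDeriv μ x ≤ C} ≤ c • (C • μ) := by
    gcongr; exact Measure.restrict_setOf_rnDeriv_le_le_smul hνμ C
  _ = ((c : ℝ≥0∞) * C) • μ := by rw [← smul_smul]; rfl
  _ ≤ (1 : ℝ≥0∞) • μ := by gcongr
  _ = μ := one_smul _ _

theorem Measure.toSignedMeasure_sub_add_smul {μ κ p : Measure α} [IsFiniteMeasure μ]
    [IsFiniteMeasure κ] [IsFiniteMeasure p] {c : ℝ≥0} (hκ : c • κ ≤ μ) :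
    (μ - c • κ + c • p).toSignedMeasure
      = μ.toSignedMeasure + c • (p.toSignedMeasure - κ.toSignedMeasure) := by
  have hμ : (μ - c • κ).toSignedMeasure + c • κ.toSignedMeasure = μ.toSignedMeasure := by
    rw [← Measure.toSignedMeasure_smul, ← Measure.toSignedMeasure_add]
    exact Measure.toSignedMeasure_congr (Measure.sub_add_cancel_of_le hκ)
  rw [Measure.toSignedMeasure_add, Measure.toSignedMeasure_smul, ← hμ, smul_sub]
  abel

theorem Measure.toSignedMeasure_sub_restrict {q : Measure α} [IsFiniteMeasure q] {A : Set α}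
    (hA : MeasurableSet A) :
    q.toSignedMeasure - (q.restrict A).toSignedMeasure = (q.restrict Aᶜ).toSignedMeasure := by
  rw [sub_eq_iff_eq_add', ← Measure.toSignedMeasure_add]
  exact Measure.toSignedMeasure_congr (Measure.restrict_add_restrict_compl hA).symm

theorem SignedMeasure.posPart_le_totalVariation (s : SignedMeasure α) :
    s.toJordanDecomposition.posPart ≤ s.totalVariation :=
  Measure.le_add_right le_rfl

theorem SignedMeasure.toSignedMeasure_posPart_sub_self (s : SignedMeasure α) :
    s.toJordanDecomposition.posPart.toSignedMeasure - s
      = s.toJordanDecomposition.negPart.toSignedMeasure :=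
  sub_eq_of_eq_add' (sub_eq_iff_eq_add.1 s.toSignedMeasure_toJordanDecomposition)

theorem Measure.totalVariation_toSignedMeasure (κ : Measure α) [IsFiniteMeasure κ] :
    κ.toSignedMeasure.totalVariation = κ := by
  rw [SignedMeasure.totalVariation_eq_variation, Measure.variation_toSignedMeasure]

theorem lintegral_sub_add_smul_lt_top {μ κ p : Measure α} {c : ℝ≥0} {g : α → ℝ≥0∞}
    (hμ : ∫⁻ x, g x ∂μ < ∞) (hp : ∫⁻ x, g x ∂p < ∞) :
    ∫⁻ x, g x ∂(μ - κ + c • p) < ∞ := by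
  rw [lintegral_add_measure, lintegral_smul_measure]
  exact ENNReal.add_lt_top.2 ⟨(lintegral_mono' Measure.sub_le le_rfl).trans_lt hμ,
    ENNReal.mul_lt_top ENNReal.coe_lt_top hp⟩

end MeasureTheory

theorem toSM_of_isFiniteMeasure {α : Type*} [MeasurableSpace α] (κ : Measure α)
    [IsFiniteMeasure κ] : toSM κ = κ.toSignedMeasure :=
  dif_pos ‹_›

theorem tvNorm_toSignedMeasure {α : Type*} [MeasurableSpace α] (κ : Measure α)
    [IsFiniteMeasure κ] : tvNorm κ.toSignedMeasure = (κ Set.univ).toReal := by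
  rw [tvNorm, Measure.totalVariation_toSignedMeasure]

theorem tangentSet_moment_measures_superset_general (m : ℕ) (d : ℝ)
    (μ : Measure (E m)) [IsFiniteMeasure μ]
    (hμmom : ∫⁻ x, ENNReal.ofReal (‖x‖ ^ d) ∂μ < ⊤)
    (h : SignedMeasure (E m)) (hhmom : FiniteMomentSM d h)
    (hac : h.toJordanDecomposition.negPart ≪ μ) :
    ∀ ε > (0 : ℝ), ∃ δ > (0 : ℝ), ∀ t : ℝ, 0 < t → t < δ →
      ∃ ν : Measure (E m), IsFiniteMeasure ν ∧
        (∫⁻ x, ENNReal.ofReal (‖x‖ ^ d) ∂ν < ⊤) ∧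
        tvNorm (t⁻¹ • (toSM ν - toSM μ) - h) < ε := by
  intro ε hε
  set p := h.toJordanDecomposition.posPart
  set q := h.toJordanDecomposition.negPart
  obtain ⟨n, hn⟩ := ((tendsto_measure_natCast_lt_of_ae_lt_top (Measure.measurable_rnDeriv q μ)
    (hac.ae_le (Measure.rnDeriv_lt_top q μ))).eventually_lt_const
      (ENNReal.ofReal_pos.2 hε)).exists
  refine ⟨((n : ℝ) + 1)⁻¹, by positivity, fun t ht htδ => ?_⟩
  set A := {x | q.rnDeriv μ x ≤ n}
  lift t to ℝ≥0 using ht.le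
  have htn : (t : ℝ≥0∞) * n ≤ 1 := by
    have h1 : t * (n + 1) < 1 :=
      (NNReal.lt_inv_iff_mul_lt (by positivity)).1 (by exact_mod_cast htδ)
    have h2 : t * n ≤ 1 := le_trans (by gcongr; simp) h1.le
    exact_mod_cast h2
  have hle : t • q.restrict A ≤ μ := Measure.smul_restrict_setOf_rnDeriv_le_le hac htn
  refine ⟨μ - t • q.restrict A + t • p, inferInstance,
    lintegral_sub_add_smul_lt_top hμmom
      ((lintegral_mono' h.posPart_le_totalVariation le_rfl).trans_lt hhmom), ?_⟩
  have hA : MeasurableSet A := measurableSet_le (Measure.measurable_rnDeriv q μ) measurable_const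
  rw [toSM_of_isFiniteMeasure, toSM_of_isFiniteMeasure, Measure.toSignedMeasure_sub_add_smul hle,
    add_sub_cancel_left, NNReal.smul_def, smul_smul, inv_mul_cancel₀ ht.ne',
    one_smul, sub_right_comm, h.toSignedMeasure_posPart_sub_self,
    Measure.toSignedMeasure_sub_restrict hA, tvNorm_toSignedMeasure, Measure.restrict_apply_univ]
  exact ENNReal.toReal_lt_of_lt_ofReal (by simpa [A, Set.compl_ofPred] using hn)

/-- The first order tangent set to `M_d⁺(ℝ^m)` at
`μ ∈ M_d⁺(ℝ^m)`, computed in `M_d(ℝ^m)` with the total variation norm, contains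
`{ h ∈ M_d(ℝ^m) : h⁻ ≪ μ }`. -/
theorem tangentSet_moment_measures_superset (m : ℕ) (d : ℝ) (hd : 1 ≤ d)
    (μ : Measure (E m)) [IsFiniteMeasure μ]
    (hμmom : ∫⁻ x, ENNReal.ofReal (‖x‖ ^ d) ∂μ < ⊤)
    (h : SignedMeasure (E m)) (hhmom : FiniteMomentSM d h)
    (hac : h.toJordanDecomposition.negPart ≪ μ) :
    ∀ ε > (0 : ℝ), ∃ δ > (0 : ℝ), ∀ t : ℝ, 0 < t → t < δ →
      ∃ ν : Measure (E m), IsFiniteMeasure ν ∧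
        (∫⁻ x, ENNReal.ofReal (‖x‖ ^ d) ∂ν < ⊤) ∧
        tvNorm (t⁻¹ • (toSM ν - toSM μ) - h) < ε :=
  tangentSet_moment_measures_superset_general m d μ hμmom h hhmom hac
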